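/- arXiv:1704.02524 — 2 statements merged into one kernel-verified Lean document; each statement's English description precedes it below -/
import Mathlib

section
/- Let c : ℝ^d → ℝ be continuous with c₀ ≤ c(x) ≤ C₀ for constants C₀ ≥ c₀ > 0, and let W ⊆ ℝ^d be a compact convex balanced absorbing set with 0 in its interior. Define d̃(x,y) = inf{t > 0 : ∃ γ ∈ C^∞([0,t], ℝ^d), γ(0) = x, γ(t) = y, γ'(s) ∈ c(γ(s))·W for all s}. Then d̃ is a metric on ℝ^d: it is nonnegative, zero iff x = y, symmetric, and satisfies the triangle inequality. -/
open scoped Pointwise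
open Real Set

noncomputable section
namespace CDAux

lemma exists_reparam (t θ δ : ℝ) (ht : 0 < t) (hθ : 0 < θ) (hδ : 0 < δ) :
    ∃ φ ψ : ℝ → ℝ, ContDiff ℝ ((⊤:ℕ∞) : WithTop ℕ∞) φ ∧ Continuous ψ ∧
      (∀ s, HasDerivAt φ (ψ s) s) ∧ (∀ s, ψ s ∈ Icc 0 θ) ∧
      (∀ s, φ s ∈ Icc 0 t) ∧ (∀ s ≤ (0:ℝ), φ s = 0) ∧
      (∀ s, t/θ + 2*δ ≤ s → φ s = t) := by
  obtain ⟨A, hA⟩ : ∃ A : ℝ, A = t/θ + 2*δ := ⟨_, rfl⟩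
  have htθ : 0 < t/θ := div_pos ht hθ
  have hA0 : 0 < A := by rw [hA]; positivity
  obtain ⟨η, hηdef⟩ : ∃ η : ℝ → ℝ,
      η = fun u => smoothTransition (u/δ) * smoothTransition ((A - u)/δ) := ⟨_, rfl⟩
  have hηeq : ∀ u, η u = smoothTransition (u/δ) * smoothTransition ((A - u)/δ) := by
    intro u; rw [hηdef]
  have hηc : Continuous η := by
    rw [hηdef]
    exact (smoothTransition.continuous.comp (continuous_id.div_const δ)).mul
      (smoothTransition.continuous.comp ((continuous_const.sub continuous_id).div_const δ))
  have hηsm : ContDiff ℝ ((⊤:ℕ∞) : WithTop ℕ∞) η := by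
    rw [hηdef]
    exact (smoothTransition.contDiff.comp (contDiff_id.div_const δ)).mul
      (smoothTransition.contDiff.comp ((contDiff_const.sub contDiff_id).div_const δ))
  have hηnn : ∀ u, 0 ≤ η u := fun u => by
    rw [hηeq]; exact mul_nonneg (smoothTransition.nonneg _) (smoothTransition.nonneg _)
  have hηle : ∀ u, η u ≤ 1 := fun u => by
    rw [hηeq]
    exact mul_le_one₀ (smoothTransition.le_one _) (smoothTransition.nonneg _)
      (smoothTransition.le_one _)
  have hη0 : ∀ u ≤ (0:ℝ), η u = 0 := by
    intro u hu
    rw [hηeq, smoothTransition.zero_of_nonpos (by apply div_nonpos_of_nonpos_of_nonneg <;> linarith),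
      zero_mul]
  have hηA : ∀ u, A ≤ u → η u = 0 := by
    intro u hu
    have h2 : smoothTransition ((A - u)/δ) = 0 :=
      smoothTransition.zero_of_nonpos (by apply div_nonpos_of_nonpos_of_nonneg <;> linarith)
    rw [hηeq, h2, mul_zero]
  have hle : δ ≤ A - δ := by
    have h : A - δ - δ = t/θ := by rw [hA]; ring
    linarith
  have hηone : ∀ u ∈ Icc δ (A - δ), η u = 1 := by
    intro u hu
    have h1 : (1:ℝ) ≤ u/δ := (le_div_iff₀ hδ).2 (by linarith [hu.1])
    have h2 : (1:ℝ) ≤ (A - u)/δ := (le_div_iff₀ hδ).2 (by linarith [hu.2])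
    rw [hηeq, smoothTransition.one_of_one_le h1, smoothTransition.one_of_one_le h2, mul_one]
  obtain ⟨G, hGdef⟩ : ∃ G : ℝ → ℝ, G = fun s => ∫ u in (0:ℝ)..s, η u := ⟨_, rfl⟩
  have hGeq : ∀ s, G s = ∫ u in (0:ℝ)..s, η u := by intro s; rw [hGdef]
  have hG : ∀ s, HasDerivAt G (η s) s := by
    intro s
    rw [hGdef]
    exact intervalIntegral.integral_hasDerivAt_right (hηc.intervalIntegrable _ _)
      (hηc.stronglyMeasurableAtFilter _ _) hηc.continuousAt
  obtain ⟨I, hIdef⟩ : ∃ I : ℝ, I = G A := ⟨_, rfl⟩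
  have hmid : ∫ u in δ..(A - δ), η u = t/θ := by
    rw [intervalIntegral.integral_congr (g := fun _ => (1:ℝ))
      (fun u hu => hηone u (by rwa [Set.uIcc_of_le hle] at hu))]
    rw [intervalIntegral.integral_const, smul_eq_mul, mul_one, hA]
    ring
  have hIge : t/θ ≤ I := by
    rw [hIdef, hGeq, ← hmid]
    exact intervalIntegral.integral_mono_interval hδ.le hle (by linarith)
      (Filter.Eventually.of_forall hηnn) (hηc.intervalIntegrable _ _)
  have hIpos : 0 < I := lt_of_lt_of_le htθ hIge
  have hlampos : 0 < t/I := div_pos ht hIpos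
  have hlamθ : t/I ≤ θ := by
    rw [div_le_iff₀ hIpos]
    calc t = θ * (t/θ) := by field_simp
    _ ≤ θ * I := by nlinarith
  have hψmem : ∀ s, (t/I) * η s ∈ Icc (0:ℝ) θ := by
    intro s
    refine ⟨mul_nonneg hlampos.le (hηnn s), ?_⟩
    calc (t/I) * η s ≤ (t/I) * 1 := by nlinarith [hηle s, hηnn s]
    _ = t/I := mul_one _
    _ ≤ θ := hlamθ
  have hφd : ∀ s, HasDerivAt (fun s => (t/I) * G s) ((t/I) * η s) s := fun s =>
    (hG s).const_mul _
  have hmono : Monotone (fun s => (t/I) * G s) := by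
    apply monotone_of_deriv_nonneg (fun s => (hφd s).differentiableAt)
    intro s
    rw [(hφd s).deriv]
    exact (hψmem s).1
  have hφ0 : ∀ s ≤ (0:ℝ), (t/I) * G s = 0 := by
    intro s hs
    have hz : G s = 0 := by
      rw [hGeq, intervalIntegral.integral_congr (g := fun _ => (0:ℝ))
        (fun u hu => ?_), intervalIntegral.integral_zero]
      rw [Set.uIcc_of_ge hs] at hu
      exact hη0 u hu.2
    rw [hz, mul_zero]
  have hφA : ∀ s, A ≤ s → (t/I) * G s = t := by
    intro s hs
    have hz : ∫ u in A..s, η u = 0 := by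
      rw [intervalIntegral.integral_congr (g := fun _ => (0:ℝ)) (fun u hu => ?_),
        intervalIntegral.integral_zero]
      rw [Set.uIcc_of_le hs] at hu
      exact hηA u hu.1
    have hsplit : G A + ∫ u in A..s, η u = G s := by
      rw [hGeq, hGeq]
      exact intervalIntegral.integral_add_adjacent_intervals (hηc.intervalIntegrable _ _)
        (hηc.intervalIntegrable _ _)
    have : G s = I := by rw [← hsplit, hz, add_zero, hIdef]
    rw [this, div_mul_cancel₀ t hIpos.ne']
  have hrange : ∀ s, (t/I) * G s ∈ Icc 0 t := by
    intro s
    constructor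
    · rcases le_or_gt s 0 with h | h
      · rw [hφ0 s h]
      · rw [← hφ0 0 le_rfl]; exact hmono h.le
    · rcases le_or_gt A s with h | h
      · rw [hφA s h]
      · exact le_trans (hmono h.le) (le_of_eq (hφA A le_rfl))
  refine ⟨fun s => (t/I) * G s, fun s => (t/I) * η s, ?_, by fun_prop, hφd, hψmem, hrange, hφ0,
    fun s hs => hφA s (by rw [hA]; exact hs)⟩
  rw [contDiff_infty_iff_deriv]
  refine ⟨fun s => (hφd s).differentiableAt, ?_⟩
  have hdeq : deriv (fun s => (t/I) * G s) = fun s => (t/I) * η s :=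
    funext fun s => (hφd s).deriv
  rw [hdeq]
  exact contDiff_const.mul hηsm

end CDAux
namespace CDAux

variable {E : Type*} [NormedAddCommGroup E] [NormedSpace ℝ E]

lemma mem_smul_of_norm_lt {W : Set E} {r : ℝ} (hr : Metric.ball (0:E) r ⊆ W)
    {b : ℝ} (hb : 0 < b) {u : E} (hu : ‖u‖ < b * r) : u ∈ b • W := by
  refine ⟨b⁻¹ • u, hr ?_, ?_⟩
  · rw [Metric.mem_ball, dist_zero_right, norm_smul, norm_inv, Real.norm_eq_abs,
      abs_of_pos hb, ← div_eq_inv_mul, div_lt_iff₀ hb]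
    linarith [hu]
  · exact smul_inv_smul₀ hb.ne' u
lemma smul_subset_smul {W : Set E} (hWconv : Convex ℝ W) (h0W : (0:E) ∈ W)
    {a b : ℝ} (ha : 0 ≤ a) (hab : a ≤ b) (hb : 0 < b) : a • W ⊆ b • W := by
  rintro - ⟨w, hw, rfl⟩
  refine ⟨(a/b) • w, hWconv.smul_mem_of_zero_mem h0W hw
    ⟨div_nonneg ha hb.le, (div_le_one hb).2 hab⟩, ?_⟩
  show b • ((a/b) • w) = a • w
  rw [smul_smul]
  congr 1
  field_simp

end CDAux

namespace CDAux2
open CDAux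
variable {d : ℕ}
local notation "E" => EuclideanSpace ℝ (Fin d)

lemma exists_flat (c : E → ℝ) (W : Set E) (hWconv : Convex ℝ W) (h0W : (0:E) ∈ W)
    (x y : E) (t θ δ : ℝ) (ht : 0 < t) (hθ : 0 < θ) (hδ : 0 < δ)
    (γ : ℝ → E) (hγ : ContDiff ℝ ((⊤:ℕ∞) : WithTop ℕ∞) γ) (hγ0 : γ 0 = x) (hγt : γ t = y)
    (hγd : ∀ s ∈ Icc (0:ℝ) t, deriv γ s ∈ c (γ s) • W) :
    ∃ Γ : ℝ → E, ContDiff ℝ ((⊤:ℕ∞) : WithTop ℕ∞) Γ ∧ (∀ s ≤ (0:ℝ), Γ s = x) ∧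
      (∀ s, t/θ + 2*δ ≤ s → Γ s = y) ∧ (∀ s, deriv Γ s ∈ (θ * c (Γ s)) • W) := by
  obtain ⟨φ, ψ, hφsm, hψc, hφd, hψmem, hφmem, hφ0, hφA⟩ := exists_reparam t θ δ ht hθ hδ
  have hγdiff : Differentiable ℝ γ := hγ.differentiable (by simp)
  refine ⟨fun s => γ (φ s), hγ.comp hφsm, ?_, ?_, ?_⟩
  · intro s hs; show γ (φ s) = x; rw [hφ0 s hs, hγ0]
  · intro s hs; show γ (φ s) = y; rw [hφA s hs, hγt]
  · intro s
    have hd : HasDerivAt (fun s => γ (φ s)) (ψ s • deriv γ (φ s)) s :=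
      HasDerivAt.scomp s (hγdiff (φ s)).hasDerivAt (hφd s)
    rw [hd.deriv]
    obtain ⟨w, hw, hwe⟩ := hγd (φ s) (hφmem s)
    have hwe' : c (γ (φ s)) • w = deriv γ (φ s) := hwe
    refine ⟨(ψ s / θ) • w, hWconv.smul_mem_of_zero_mem h0W hw
      ⟨div_nonneg (hψmem s).1 hθ.le, (div_le_one hθ).2 (hψmem s).2⟩, ?_⟩
    show (θ * c (γ (φ s))) • ((ψ s / θ) • w) = ψ s • deriv γ (φ s)
    rw [← hwe', smul_smul, smul_smul]
    congr 1
    field_simp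

lemma exists_glue (c : E → ℝ) (W : Set E) (hWconv : Convex ℝ W) (h0W : (0:E) ∈ W)
    (x y z : E) (t₁ t₂ θ δ : ℝ) (ht₁ : 0 < t₁) (ht₂ : 0 < t₂) (hθ : 0 < θ) (hδ : 0 < δ)
    (γ₁ : ℝ → E) (hγ₁ : ContDiff ℝ ((⊤:ℕ∞) : WithTop ℕ∞) γ₁) (hγ₁0 : γ₁ 0 = x)
    (hγ₁t : γ₁ t₁ = y) (hγ₁d : ∀ s ∈ Icc (0:ℝ) t₁, deriv γ₁ s ∈ c (γ₁ s) • W)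
    (γ₂ : ℝ → E) (hγ₂ : ContDiff ℝ ((⊤:ℕ∞) : WithTop ℕ∞) γ₂) (hγ₂0 : γ₂ 0 = y)
    (hγ₂t : γ₂ t₂ = z) (hγ₂d : ∀ s ∈ Icc (0:ℝ) t₂, deriv γ₂ s ∈ c (γ₂ s) • W) :
    ∃ Γ : ℝ → E, ContDiff ℝ ((⊤:ℕ∞) : WithTop ℕ∞) Γ ∧ Γ 0 = x ∧
      Γ (t₁/θ + t₂/θ + 5*δ) = z ∧ (∀ s, deriv Γ s ∈ (θ * c (Γ s)) • W) := by
  obtain ⟨Γ₁, hΓ₁sm, hΓ₁0, hΓ₁A, hΓ₁d⟩ :=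
    exists_flat c W hWconv h0W x y t₁ θ δ ht₁ hθ hδ γ₁ hγ₁ hγ₁0 hγ₁t hγ₁d
  obtain ⟨Γ₂, hΓ₂sm, hΓ₂0, hΓ₂A, hΓ₂d⟩ :=
    exists_flat c W hWconv h0W y z t₂ θ δ ht₂ hθ hδ γ₂ hγ₂ hγ₂0 hγ₂t hγ₂d
  obtain ⟨A₁, hA₁⟩ : ∃ A₁ : ℝ, A₁ = t₁/θ + 2*δ := ⟨_, rfl⟩
  obtain ⟨J, hJ⟩ : ∃ J : ℝ, J = A₁ + δ := ⟨_, rfl⟩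
  have htθ₁ : 0 < t₁/θ := div_pos ht₁ hθ
  have htθ₂ : 0 < t₂/θ := div_pos ht₂ hθ
  have hA₁pos : 0 < A₁ := by rw [hA₁]; positivity
  have hA₁J : A₁ < J := by rw [hJ]; linarith
  have hJpos : 0 < J := lt_trans hA₁pos hA₁J
  obtain ⟨Γ, hΓdef⟩ : ∃ Γ : ℝ → E, Γ = fun s => if s < J then Γ₁ s else Γ₂ (s - J) := ⟨_, rfl⟩
  have h₁ : EqOn Γ Γ₁ (Iio J) := fun s hs => by rw [hΓdef]; exact if_pos hs
  have h₂ : EqOn Γ (fun s => Γ₂ (s - J)) (Ioi A₁) := by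
    intro s hs
    simp only [hΓdef]
    by_cases h : s < J
    · rw [if_pos h, hΓ₁A s (by rw [← hA₁]; exact le_of_lt hs), hΓ₂0 (s - J) (by linarith)]
    · rw [if_neg h]
  have hsh : ContDiff ℝ ((⊤:ℕ∞) : WithTop ℕ∞) (fun s : ℝ => Γ₂ (s - J)) :=
    hΓ₂sm.comp (contDiff_id.sub contDiff_const)
  have hΓsm : ContDiff ℝ ((⊤:ℕ∞) : WithTop ℕ∞) Γ := by
    rw [contDiff_iff_contDiffAt]
    intro s
    rcases lt_or_ge s J with h | h
    · exact hΓ₁sm.contDiffAt.congr_of_eventuallyEq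
        (Filter.eventuallyEq_of_mem (Iio_mem_nhds h) h₁)
    · exact hsh.contDiffAt.congr_of_eventuallyEq
        (Filter.eventuallyEq_of_mem (Ioi_mem_nhds (lt_of_lt_of_le hA₁J h)) h₂)
  refine ⟨Γ, hΓsm, ?_, ?_, ?_⟩
  · rw [h₁ hJpos, hΓ₁0 0 le_rfl]
  · have hTJ : J ≤ t₁/θ + t₂/θ + 5*δ := by rw [hJ, hA₁]; linarith
    have : t₁/θ + t₂/θ + 5*δ ∈ Ioi A₁ := by rw [mem_Ioi, hA₁]; linarith
    rw [h₂ this]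
    exact hΓ₂A _ (by rw [hJ, hA₁]; ring_nf; linarith)
  · intro s
    rcases lt_or_ge s J with h | h
    · have he : Γ =ᶠ[nhds s] Γ₁ := Filter.eventuallyEq_of_mem (Iio_mem_nhds h) h₁
      rw [he.deriv_eq, h₁ h]
      exact hΓ₁d s
    · have hs' : s ∈ Ioi A₁ := lt_of_lt_of_le hA₁J h
      have he : Γ =ᶠ[nhds s] (fun s => Γ₂ (s - J)) :=
        Filter.eventuallyEq_of_mem (Ioi_mem_nhds hs') h₂
      rw [he.deriv_eq, h₂ hs', deriv_comp_sub_const]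
      exact hΓ₂d (s - J)


lemma one_le_itop' : (1 : WithTop ℕ∞) ≤ ((⊤:ℕ∞) : WithTop ℕ∞) := by
  exact_mod_cast (le_top : (1:ℕ∞) ≤ ⊤)

lemma euc_norm_le {d : ℕ} (w : EuclideanSpace ℝ (Fin d)) (m : ℝ) (hm : 0 ≤ m)
    (h : ∀ i, |w i| ≤ m) : ‖w‖ ≤ ((d:ℝ)+1) * m := by
  rw [EuclideanSpace.norm_eq]
  have h1 : ∑ i, ‖w i‖^2 ≤ ∑ _i : Fin d, m^2 := Finset.sum_le_sum (fun i _ => by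
    rw [Real.norm_eq_abs]; nlinarith [h i, abs_nonneg (w i)])
  have h2 : (∑ _i : Fin d, m^2) = (d:ℝ) * m^2 := by
    rw [Finset.sum_const, Finset.card_univ, Fintype.card_fin, nsmul_eq_mul]
  calc √(∑ i, ‖w i‖^2) ≤ √((d:ℝ) * m^2) := Real.sqrt_le_sqrt (by rw [← h2]; exact h1)
  _ ≤ √((((d:ℝ)+1))^2 * m^2) := Real.sqrt_le_sqrt (by
      have hd : (0:ℝ) ≤ (d:ℝ) := Nat.cast_nonneg d
      nlinarith [sq_nonneg m, hd, mul_nonneg hd (sq_nonneg m),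
        mul_nonneg (mul_nonneg hd hd) (sq_nonneg m)])
  _ = ((d:ℝ)+1) * m := by
      rw [← mul_pow, Real.sqrt_sq (by positivity)]

lemma poly_antideriv (p : Polynomial ℝ) :
    ∃ F : ℝ → ℝ, ContDiff ℝ (⊤ : WithTop ℕ∞) F ∧ F 0 = 0 ∧
      ∀ s, HasDerivAt F (p.eval s) s := by
  refine ⟨fun s => ∑ k ∈ Finset.range (p.natDegree + 1), (p.coeff k / ((k:ℝ)+1)) * s^(k+1),
    ?_, ?_, ?_⟩
  · exact ContDiff.sum fun k _ => by fun_prop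
  · simp
  · intro s
    have hterm : ∀ k ∈ Finset.range (p.natDegree + 1),
        HasDerivAt (fun s : ℝ => (p.coeff k / ((k:ℝ)+1)) * s^(k+1)) (p.coeff k * s^k) s := by
      intro k _
      have h := (hasDerivAt_pow (k+1) s).const_mul (p.coeff k / ((k:ℝ)+1))
      have hred : k + 1 - 1 = k := Nat.add_sub_cancel k 1
      rw [hred] at h
      have hk : ((k:ℝ)+1) ≠ 0 := by positivity
      have hsimp : (p.coeff k / ((k:ℝ)+1)) * ((((k+1 : ℕ)):ℝ) * s ^ k) = p.coeff k * s^k := by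
        push_cast
        field_simp
      rw [hsimp] at h
      exact h
    have hsum := HasDerivAt.fun_sum hterm
    rw [Polynomial.eval_eq_sum_range]
    exact hsum

set_option maxHeartbeats 2000000 in
lemma exists_analytic_approx {d : ℕ} (c : EuclideanSpace ℝ (Fin d) → ℝ) (hc : Continuous c)
    (c₀ : ℝ) (hc₀ : 0 < c₀) (hlb : ∀ p, c₀ ≤ c p)
    (W : Set (EuclideanSpace ℝ (Fin d))) (hWconv : Convex ℝ W)
    (h0W : (0:EuclideanSpace ℝ (Fin d)) ∈ W)
    (r : ℝ) (hr : 0 < r) (hball : Metric.ball (0:EuclideanSpace ℝ (Fin d)) r ⊆ W)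
    (θ T : ℝ) (hθ0 : 0 < θ) (hθ1 : θ < 1) (hT : 0 < T)
    (x z : EuclideanSpace ℝ (Fin d)) (Γ : ℝ → EuclideanSpace ℝ (Fin d))
    (hΓ : ContDiff ℝ ((⊤:ℕ∞) : WithTop ℕ∞) Γ)
    (hΓ0 : Γ 0 = x) (hΓT : Γ T = z)
    (hΓd : ∀ s, deriv Γ s ∈ (θ * c (Γ s)) • W) :
    ∃ P : ℝ → EuclideanSpace ℝ (Fin d), ContDiff ℝ (⊤ : WithTop ℕ∞) P ∧ P 0 = x ∧ P T = z ∧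
      ∀ s ∈ Icc (0:ℝ) T, deriv P s ∈ c (P s) • W := by
  have hΓdiff : Differentiable ℝ Γ := hΓ.differentiable (by simp)
  obtain ⟨β, hβ⟩ : ∃ β : ℝ, β = (1+θ)/2 := ⟨_, rfl⟩
  have hθβ : θ < β := by rw [hβ]; linarith
  have hβ1 : β < 1 := by rw [hβ]; linarith
  have hβpos : 0 < β := by rw [hβ]; linarith
  set v : ℝ → EuclideanSpace ℝ (Fin d) := deriv Γ with hv
  have hvc : Continuous v := hΓ.continuous_deriv one_le_itop'
  have hΓc : Continuous Γ := hΓ.continuous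
  set K : Set (EuclideanSpace ℝ (Fin d)) := Γ '' Icc 0 T with hK
  have hKcomp : IsCompact K := (isCompact_Icc).image hΓc
  obtain ⟨ε₀, hε₀def⟩ : ∃ e : ℝ, e = (1 - θ/β) * c₀ := ⟨_, rfl⟩
  have hθβ1 : θ/β < 1 := (div_lt_one hβpos).2 hθβ
  have hε₀ : 0 < ε₀ := by rw [hε₀def]; have := hθβ1; nlinarith
  have hKc : IsCompact (Metric.cthickening 1 K) := hKcomp.cthickening
  have huc := hKc.uniformContinuousOn_of_continuous hc.continuousOn
  rw [Metric.uniformContinuousOn_iff] at huc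
  obtain ⟨ρ₀, hρ₀, hucp⟩ := huc ε₀ hε₀
  obtain ⟨ρ, hρdef⟩ : ∃ ρ : ℝ, ρ = min ρ₀ 1 := ⟨_, rfl⟩
  have hρ : 0 < ρ := by rw [hρdef]; exact lt_min hρ₀ one_pos
  have hρ1 : ρ ≤ 1 := by rw [hρdef]; exact min_le_right _ _
  have hρρ₀ : ρ ≤ ρ₀ := by rw [hρdef]; exact min_le_left _ _
  have hclose : ∀ p ∈ K, ∀ q, dist q p < ρ → θ * c p ≤ β * c q := by
    intro p hp q hq
    have hpK : p ∈ Metric.cthickening 1 K := Metric.self_subset_cthickening _ hp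
    have hqK : q ∈ Metric.cthickening 1 K :=
      Metric.mem_cthickening_of_dist_le q p 1 _ hp (le_trans hq.le hρ1)
    have hd := hucp q hqK p hpK (lt_of_lt_of_le hq hρρ₀)
    rw [Real.dist_eq] at hd
    have h1 : c p - ε₀ ≤ c q := by
      rcases abs_lt.1 hd with ⟨h, h'⟩; linarith
    have h2 : ε₀ ≤ (1 - θ/β) * c p := by
      rw [hε₀def]
      exact mul_le_mul_of_nonneg_left (hlb p) (by linarith)
    have h3 : θ/β * c p ≤ c q := by nlinarith
    calc θ * c p = β * (θ/β * c p) := by field_simp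
    _ ≤ β * c q := by nlinarith
  obtain ⟨κ, hκdef⟩ : ∃ k : ℝ, k = min (ρ / (2*T + 1)) ((1-β)*c₀*r/3) := ⟨_, rfl⟩
  have hκpos : 0 < κ := by
    rw [hκdef]
    refine lt_min (div_pos hρ (by linarith)) ?_
    exact div_pos (mul_pos (mul_pos (by linarith) hc₀) hr) (by norm_num)
  have hκρ : κ * (2*T+1) ≤ ρ := by
    have h := min_le_left (ρ / (2*T + 1)) ((1-β)*c₀*r/3)
    rw [← hκdef] at h
    rw [← le_div_iff₀ (by linarith)]
    exact h
  have hκr : 3*κ ≤ (1-β)*c₀*r := by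
    have h := min_le_right (ρ / (2*T + 1)) ((1-β)*c₀*r/3)
    rw [← hκdef] at h
    linarith
  obtain ⟨κ₁, hκ₁def⟩ : ∃ k : ℝ, k = κ / ((d:ℝ)+1) := ⟨_, rfl⟩
  have hκ₁pos : 0 < κ₁ := by rw [hκ₁def]; positivity
  -- coordinate polynomials
  have hvic : ∀ i : Fin d, Continuous (fun s => v s i) := fun i => by fun_prop
  have hpoly : ∀ i : Fin d, ∃ p : Polynomial ℝ,
      ∀ s ∈ Icc (0:ℝ) T, |p.eval s - v s i| < κ₁ := fun i =>
    exists_polynomial_near_of_continuousOn 0 T _ (hvic i).continuousOn κ₁ hκ₁pos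
  choose p hp using hpoly
  choose F hFsm hF0 hFd using fun i => poly_antideriv (p i)
  set L : (Fin d → ℝ) ≃L[ℝ] EuclideanSpace ℝ (Fin d) := (EuclideanSpace.equiv (Fin d) ℝ).symm
    with hL
  obtain ⟨Fb, hFbdef⟩ : ∃ Fb : ℝ → EuclideanSpace ℝ (Fin d),
      Fb = fun s => L (fun i => F i s) := ⟨_, rfl⟩
  obtain ⟨Q, hQdef⟩ : ∃ Q : ℝ → EuclideanSpace ℝ (Fin d),
      Q = fun s => L (fun i => (p i).eval s) := ⟨_, rfl⟩
  have hFbd : ∀ s, HasDerivAt Fb (Q s) s := by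
    intro s
    simp only [hFbdef, hQdef]
    exact (L.hasFDerivAt).comp_hasDerivAt s (hasDerivAt_pi.2 fun i => hFd i s)
  have hFbsm : ContDiff ℝ (⊤ : WithTop ℕ∞) Fb := by
    simp only [hFbdef]
    exact contDiff_euclidean.2 fun i => hFsm i
  have hFb0 : Fb 0 = 0 := by
    simp only [hFbdef]
    have hz : (fun i => F i 0) = (0 : Fin d → ℝ) := funext fun i => hF0 i
    rw [hz, map_zero]
  have hQsub : ∀ s (i : Fin d), (Q s - v s) i = (p i).eval s - v s i := by
    intro s i
    have h1 : (Q s) i = (p i).eval s := by rw [hQdef]; rfl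
    have h2 : (Q s - v s) i = (Q s) i - (v s) i := by simp
    rw [h2, h1]
  have hQv : ∀ s ∈ Icc (0:ℝ) T, ‖Q s - v s‖ ≤ κ := by
    intro s hs
    have h := euc_norm_le (Q s - v s) κ₁ hκ₁pos.le
      (fun i => by rw [hQsub]; exact (hp i s hs).le)
    calc ‖Q s - v s‖ ≤ ((d:ℝ)+1) * κ₁ := h
    _ = κ := by rw [hκ₁def]; field_simp
  have hdev : ∀ s ∈ Icc (0:ℝ) T, ‖Fb s - (Γ s - x)‖ ≤ κ * T := by
    intro s hs
    have hder : ∀ u ∈ Icc (0:ℝ) T,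
        HasDerivWithinAt (fun s => Fb s - Γ s) (Q u - v u) (Icc 0 T) u :=
      fun u _ => ((hFbd u).sub (hΓdiff u).hasDerivAt).hasDerivWithinAt
    have h := Convex.norm_image_sub_le_of_norm_hasDerivWithin_le hder
      (fun u hu => hQv u hu) (convex_Icc 0 T) ⟨le_rfl, hT.le⟩ hs
    have he : Fb s - Γ s - (Fb 0 - Γ 0) = Fb s - (Γ s - x) := by
      rw [hFb0, hΓ0]; abel
    rw [he] at h
    calc ‖Fb s - (Γ s - x)‖ ≤ κ * ‖s - 0‖ := h
    _ ≤ κ * T := by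
        rw [sub_zero, Real.norm_eq_abs, abs_of_nonneg hs.1]
        exact mul_le_mul_of_nonneg_left hs.2 hκpos.le
  obtain ⟨u₀, hu₀def⟩ : ∃ u : EuclideanSpace ℝ (Fin d), u = z - x - Fb T := ⟨_, rfl⟩
  have hu₀ : ‖u₀‖ ≤ κ * T := by
    have h := hdev T ⟨hT.le, le_rfl⟩
    rw [hΓT] at h
    have : u₀ = -(Fb T - (z - x)) := by rw [hu₀def]; abel
    rw [this, norm_neg]
    exact h
  obtain ⟨P, hPdef⟩ : ∃ P : ℝ → EuclideanSpace ℝ (Fin d),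
      P = fun s => x + Fb s + (s/T) • u₀ := ⟨_, rfl⟩
  have hPd : ∀ s, HasDerivAt P (Q s + T⁻¹ • u₀) s := by
    intro s
    simp only [hPdef]
    have h1 : HasDerivAt (fun s : ℝ => (s/T) • u₀) (T⁻¹ • u₀) s := by
      have := ((hasDerivAt_id s).div_const T).smul_const u₀
      simpa [one_div] using this
    exact ((hFbd s).const_add x).add h1
  have hPsm : ContDiff ℝ (⊤ : WithTop ℕ∞) P := by
    rw [hPdef]
    exact (contDiff_const.add hFbsm).add ((contDiff_id.div_const T).smul contDiff_const)
  have hP0 : P 0 = x := by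
    rw [hPdef]
    show x + Fb 0 + ((0:ℝ)/T) • u₀ = x
    rw [hFb0, zero_div, zero_smul, add_zero, add_zero]
  have hPT : P T = z := by
    rw [hPdef]
    show x + Fb T + (T/T) • u₀ = z
    rw [div_self hT.ne', one_smul, hu₀def]
    abel
  have hC0 : ∀ s ∈ Icc (0:ℝ) T, ‖P s - Γ s‖ < ρ := by
    intro s hs
    have h1 : P s - Γ s = (Fb s - (Γ s - x)) + (s/T) • u₀ := by
      simp only [hPdef]; abel
    have hfr : |s/T| ≤ 1 := by
      rw [abs_of_nonneg (div_nonneg hs.1 hT.le)]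
      exact (div_le_one hT).2 hs.2
    have h2 : ‖P s - Γ s‖ ≤ κ * T + κ * T := by
      rw [h1]
      refine le_trans (norm_add_le _ _) (add_le_add (hdev s hs) ?_)
      rw [norm_smul, Real.norm_eq_abs]
      calc |s/T| * ‖u₀‖ ≤ 1 * (κ * T) :=
        mul_le_mul hfr hu₀ (norm_nonneg _) one_pos.le
      _ = κ * T := one_mul _
    have hexp : κ * (2*T+1) = 2*(κ*T) + κ := by ring
    linarith
  refine ⟨P, hPsm, hP0, hPT, ?_⟩
  intro s hs
  rw [(hPd s).deriv]
  have hPsc : (1:ℝ) * c₀ ≤ c (P s) := by rw [one_mul]; exact hlb (P s)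
  have hcPpos : 0 < c (P s) := lt_of_lt_of_le hc₀ (hlb (P s))
  have herr : ‖(Q s + T⁻¹ • u₀) - v s‖ < (1-β) * c (P s) * r := by
    have hterm : ‖(Q s + T⁻¹ • u₀) - v s‖ ≤ 2*κ := by
      have h1 : (Q s + T⁻¹ • u₀) - v s = (Q s - v s) + T⁻¹ • u₀ := by abel
      rw [h1]
      refine le_trans (norm_add_le _ _) ?_
      have h2 : ‖T⁻¹ • u₀‖ ≤ κ := by
        rw [norm_smul, Real.norm_eq_abs, abs_of_pos (inv_pos.2 hT)]
        calc T⁻¹ * ‖u₀‖ ≤ T⁻¹ * (κ * T) :=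
          mul_le_mul_of_nonneg_left hu₀ (inv_pos.2 hT).le
        _ = κ := by field_simp
      linarith [hQv s hs]
    have h3 : (1-β)*c₀*r ≤ (1-β) * c (P s) * r := by
      have hb1 : (0:ℝ) < 1 - β := by linarith
      nlinarith [hlb (P s)]
    nlinarith
  have hvmem : v s ∈ (β * c (P s)) • W := by
    have hΓsK : Γ s ∈ K := ⟨s, hs, rfl⟩
    have hdist : dist (P s) (Γ s) < ρ := by
      rw [dist_eq_norm]; exact hC0 s hs
    have hab : θ * c (Γ s) ≤ β * c (P s) := hclose (Γ s) hΓsK (P s) hdist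
    have h0a : 0 ≤ θ * c (Γ s) :=
      mul_nonneg hθ0.le (le_trans hc₀.le (hlb (Γ s)))
    exact smul_subset_smul hWconv h0W h0a hab (by positivity) (hΓd s)
  have hemem : (Q s + T⁻¹ • u₀) - v s ∈ ((1-β) * c (P s)) • W := by
    apply mem_smul_of_norm_lt hball (by nlinarith)
    calc ‖(Q s + T⁻¹ • u₀) - v s‖ < (1-β) * c (P s) * r := herr
    _ = ((1-β) * c (P s)) * r := by ring
  have hsplit : Q s + T⁻¹ • u₀ = v s + ((Q s + T⁻¹ • u₀) - v s) := by abel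
  rw [hsplit]
  obtain ⟨w₁, hw₁, hw₁e⟩ := hvmem
  obtain ⟨w₂, hw₂, hw₂e⟩ := hemem
  have hw₁e' : (β * c (P s)) • w₁ = v s := hw₁e
  have hw₂e' : ((1-β) * c (P s)) • w₂ = (Q s + T⁻¹ • u₀) - v s := hw₂e
  refine ⟨β • w₁ + (1-β) • w₂, hWconv hw₁ hw₂ hβpos.le (by linarith) (by ring), ?_⟩
  show c (P s) • (β • w₁ + (1-β) • w₂) = v s + ((Q s + T⁻¹ • u₀) - v s)
  rw [smul_add, smul_smul, smul_smul, mul_comm (c (P s)) β, mul_comm (c (P s)) (1-β),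
    hw₁e', hw₂e']



end CDAux2

open CDAux CDAux2 Set

/-- the control distance
`d̃(x,y) = inf{t > 0 : ∃ smooth γ, γ(0)=x, γ(t)=y, γ'(s) ∈ c(γ(s))·W}` is a metric. -/
theorem control_distance_is_metric {d : ℕ}
    (c : EuclideanSpace ℝ (Fin d) → ℝ) (hc : Continuous c)
    (c₀ C₀ : ℝ) (hc₀ : 0 < c₀) (hbound : ∀ x, c₀ ≤ c x ∧ c x ≤ C₀)
    (W : Set (EuclideanSpace ℝ (Fin d)))
    (hWc : IsCompact W) (hWconv : Convex ℝ W) (hWbal : -W = W)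
    (hWabs : ∀ y : EuclideanSpace ℝ (Fin d), ∃ τ : ℝ, 0 < τ ∧ y ∈ τ • W)
    (hW0 : (0 : EuclideanSpace ℝ (Fin d)) ∈ interior W)
    (dd : EuclideanSpace ℝ (Fin d) → EuclideanSpace ℝ (Fin d) → ℝ)
    (hdd : ∀ x y, dd x y = sInf {t : ℝ | 0 < t ∧
      ∃ γ : ℝ → EuclideanSpace ℝ (Fin d), ContDiff ℝ (⊤ : ℕ∞) γ ∧ γ 0 = x ∧ γ t = y ∧
        ∀ s ∈ Set.Icc (0 : ℝ) t, deriv γ s ∈ c (γ s) • W}) :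
    (∀ x y, 0 ≤ dd x y) ∧
    (∀ x y, dd x y = 0 ↔ x = y) ∧
    (∀ x y, dd x y = dd y x) ∧
    (∀ x y z, dd x z ≤ dd x y + dd y z) := by
  have h0W : (0 : EuclideanSpace ℝ (Fin d)) ∈ W := interior_subset hW0
  obtain ⟨r, hr, hball⟩ : ∃ r, 0 < r ∧ Metric.ball (0:EuclideanSpace ℝ (Fin d)) r ⊆ W := by
    rcases Metric.mem_nhds_iff.1 (mem_interior_iff_mem_nhds.1 hW0) with ⟨r, hr, h⟩
    exact ⟨r, hr, h⟩
  have hcr : 0 < c₀ * r := mul_pos hc₀ hr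
  obtain ⟨M0, hM0⟩ := hWc.exists_bound_of_continuousOn continuousOn_id
  obtain ⟨M, hMdef⟩ : ∃ M : ℝ, M = max M0 1 := ⟨_, rfl⟩
  have hMpos : 0 < M := by rw [hMdef]; exact lt_of_lt_of_le one_pos (le_max_right _ _)
  have hM : ∀ w ∈ W, ‖w‖ ≤ M := fun w hw =>
    le_trans (hM0 w hw) (by rw [hMdef]; exact le_max_left _ _)
  have hC₀pos : 0 < C₀ := lt_of_lt_of_le hc₀ (le_trans (hbound 0).1 (hbound 0).2)
  obtain ⟨S, hSdef⟩ : ∃ S' : EuclideanSpace ℝ (Fin d) → EuclideanSpace ℝ (Fin d) → Set ℝ,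
      S' = fun x y => {t : ℝ | 0 < t ∧
        ∃ γ : ℝ → EuclideanSpace ℝ (Fin d), ContDiff ℝ (⊤ : ℕ∞) γ ∧ γ 0 = x ∧ γ t = y ∧
          ∀ s ∈ Set.Icc (0 : ℝ) t, deriv γ s ∈ c (γ s) • W} := ⟨_, rfl⟩
  have hS : ∀ x y, dd x y = sInf (S x y) := by intro x y; rw [hdd, hSdef]
  have hmem : ∀ x y t, t ∈ S x y ↔ (0 < t ∧
      ∃ γ : ℝ → EuclideanSpace ℝ (Fin d), ContDiff ℝ (⊤ : ℕ∞) γ ∧ γ 0 = x ∧ γ t = y ∧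
        ∀ s ∈ Set.Icc (0 : ℝ) t, deriv γ s ∈ c (γ s) • W) := by
    intro x y t
    rw [hSdef]
    exact Iff.rfl
  have hbdd : ∀ x y, BddBelow (S x y) := fun x y =>
    ⟨0, fun t ht => ((hmem x y t).1 ht).1.le⟩
  -- Nonemptiness via straight lines
  have hSne : ∀ x y, (S x y).Nonempty := by
    intro x y
    obtain ⟨t, htdef⟩ : ∃ t : ℝ, t = ‖y - x‖/(c₀*r) + 1 := ⟨_, rfl⟩
    have hnn : 0 ≤ ‖y - x‖/(c₀*r) := div_nonneg (norm_nonneg _) hcr.le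
    have ht : 0 < t := by rw [htdef]; linarith
    refine ⟨t, (hmem x y t).2 ⟨ht, fun s => x + s • (t⁻¹ • (y - x)), by fun_prop, by simp, ?_, ?_⟩⟩
    · show x + t • (t⁻¹ • (y - x)) = y
      rw [smul_smul, mul_inv_cancel₀ ht.ne', one_smul]
      abel
    · intro s _
      have hder : HasDerivAt (fun s : ℝ => x + s • (t⁻¹ • (y - x))) (t⁻¹ • (y - x)) s := by
        have h := ((hasDerivAt_id s).smul_const (t⁻¹ • (y - x))).const_add x
        simpa using h
      rw [hder.deriv]
      apply mem_smul_of_norm_lt hball (lt_of_lt_of_le hc₀ (hbound _).1)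
      have h1 : ‖t⁻¹ • (y - x)‖ = ‖y - x‖ / t := by
        rw [norm_smul, Real.norm_eq_abs, abs_of_pos (inv_pos.2 ht), inv_mul_eq_div]
      have h2 : ‖y - x‖ / t < c₀ * r := by
        rw [div_lt_iff₀ ht]
        have he : c₀ * r * t = ‖y - x‖ + c₀ * r := by
          rw [htdef, mul_add, mul_one, mul_div_cancel₀ _ hcr.ne']
        linarith
      rw [h1]
      calc ‖y - x‖ / t < c₀ * r := h2
      _ ≤ c (x + s • (t⁻¹ • (y - x))) * r :=
        mul_le_mul_of_nonneg_right (hbound _).1 hr.le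
  -- Positivity for x ≠ y
  have hpos : ∀ x y, x ≠ y → 0 < sInf (S x y) := by
    intro x y hxy
    have hlow : ∀ t ∈ S x y, ‖y - x‖/(C₀ * M) ≤ t := by
      intro t ht
      obtain ⟨htpos, γ, hγ, hγ0, hγt, hγd⟩ := (hmem x y t).1 ht
      have hγdiff : Differentiable ℝ γ := hγ.differentiable (by simp)
      have hb : ∀ u ∈ Icc (0:ℝ) t, ‖deriv γ u‖ ≤ C₀ * M := by
        intro u hu
        obtain ⟨w, hw, hwe⟩ := hγd u hu
        have hwe' : c (γ u) • w = deriv γ u := hwe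
        rw [← hwe', norm_smul, Real.norm_eq_abs,
          abs_of_pos (lt_of_lt_of_le hc₀ (hbound _).1)]
        exact mul_le_mul (hbound (γ u)).2 (hM w hw) (norm_nonneg w) hC₀pos.le
      have hineq := Convex.norm_image_sub_le_of_norm_hasDerivWithin_le
        (f' := deriv γ) (fun u _ => (hγdiff u).hasDerivAt.hasDerivWithinAt) hb
        (convex_Icc 0 t) ⟨le_rfl, htpos.le⟩ ⟨htpos.le, le_rfl⟩
      rw [hγ0, hγt, sub_zero, Real.norm_eq_abs, abs_of_pos htpos] at hineq
      rw [div_le_iff₀ (by positivity)]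
      linarith
    have hnorm : 0 < ‖y - x‖ := by
      rw [norm_pos_iff, sub_ne_zero]
      exact fun h => hxy h.symm
    exact lt_of_lt_of_le (by positivity) (le_csInf (hSne x y) hlow)
  have hnonneg : ∀ x y, 0 ≤ dd x y := by
    intro x y
    rw [hS]
    exact le_csInf (hSne x y) (fun t ht => ((hmem x y t).1 ht).1.le)
  refine ⟨hnonneg, ?_, ?_, ?_⟩
  · -- dd x y = 0 ↔ x = y
    intro x y
    constructor
    · intro h
      by_contra hne
      have h1 := hpos x y hne
      rw [hS] at h
      linarith
    · rintro rfl
      refine le_antisymm ?_ (hnonneg x x)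
      have hle : ∀ ε, 0 < ε → sInf (S x x) ≤ 0 + ε := by
        intro ε hε
        rw [zero_add]
        refine csInf_le (hbdd x x) ((hmem x x ε).2 ⟨hε, fun _ => x, contDiff_const, rfl, rfl, ?_⟩)
        intro s _
        rw [deriv_const]
        exact ⟨0, h0W, smul_zero _⟩
      rw [hS]
      exact le_of_forall_pos_le_add hle
  · -- symmetry
    have hsy : ∀ x y, S y x ⊆ S x y := by
      intro x y t ht
      obtain ⟨htpos, γ, hγ, hγ0, hγt, hγd⟩ := (hmem y x t).1 ht
      have hγdiff : Differentiable ℝ γ := hγ.differentiable (by simp)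
      refine (hmem x y t).2 ⟨htpos, fun s => γ (t - s),
        hγ.comp (contDiff_const.sub contDiff_id), by simp [hγt], by simp [hγ0], ?_⟩
      intro s hs
      have hd : HasDerivAt (fun s => γ (t - s)) ((-1 : ℝ) • deriv γ (t - s)) s :=
        HasDerivAt.scomp s (hγdiff (t - s)).hasDerivAt ((hasDerivAt_id s).const_sub t)
      rw [hd.deriv]
      obtain ⟨w, hw, hwe⟩ := hγd (t - s) ⟨by linarith [hs.2], by linarith [hs.1]⟩
      have hwe' : c (γ (t - s)) • w = deriv γ (t - s) := hwe
      refine ⟨-w, ?_, ?_⟩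
      · rw [← hWbal]; exact Set.neg_mem_neg.2 hw
      · show c ((fun s => γ (t - s)) s) • (-w) = (-1 : ℝ) • deriv γ (t - s)
        show c (γ (t - s)) • (-w) = (-1 : ℝ) • deriv γ (t - s)
        rw [smul_neg, hwe', neg_one_smul]
    intro x y
    rw [hS, hS]
    exact le_antisymm (csInf_le_csInf (hbdd x y) (hSne y x) (hsy x y))
      (csInf_le_csInf (hbdd y x) (hSne x y) (hsy y x))
  · -- triangle inequality
    intro x y z
    apply le_of_forall_pos_le_add
    intro ε hε
    obtain ⟨δ, hδdef⟩ : ∃ δ : ℝ, δ = ε/8 := ⟨_, rfl⟩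
    have hδ : 0 < δ := by rw [hδdef]; linarith
    obtain ⟨t₁, ht₁S, ht₁lt⟩ := Real.lt_sInf_add_pos (hSne x y) hδ
    obtain ⟨t₂, ht₂S, ht₂lt⟩ := Real.lt_sInf_add_pos (hSne y z) hδ
    obtain ⟨ht₁pos, γ₁, hγ₁, hγ₁0, hγ₁t, hγ₁d⟩ := (hmem x y t₁).1 ht₁S
    obtain ⟨ht₂pos, γ₂, hγ₂, hγ₂0, hγ₂t, hγ₂d⟩ := (hmem y z t₂).1 ht₂S
    have hsum : 0 < t₁ + t₂ := by linarith
    obtain ⟨θ, hθdef⟩ : ∃ θ : ℝ, θ = (t₁+t₂)/(t₁+t₂+δ) := ⟨_, rfl⟩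
    have hθ0 : 0 < θ := by rw [hθdef]; exact div_pos hsum (by linarith)
    have hθ1 : θ < 1 := by rw [hθdef]; exact (div_lt_one (by linarith)).2 (by linarith)
    have hθsum : t₁/θ + t₂/θ = t₁ + t₂ + δ := by
      rw [hθdef, div_div_eq_mul_div, div_div_eq_mul_div, ← add_div, ← add_mul,
        mul_div_assoc, mul_comm, div_mul_cancel₀ _ hsum.ne']
    obtain ⟨Γ, hΓsm, hΓ0, hΓT, hΓd⟩ := exists_glue c W hWconv h0W x y z t₁ t₂ θ δ
      ht₁pos ht₂pos hθ0 hδ γ₁ (hγ₁.of_le (by simp)) hγ₁0 hγ₁t hγ₁d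
      γ₂ (hγ₂.of_le (by simp)) hγ₂0 hγ₂t hγ₂d
    have hTpos : 0 < t₁/θ + t₂/θ + 5*δ := by rw [hθsum]; linarith
    obtain ⟨P, hPsm, hP0, hPT, hPd⟩ := exists_analytic_approx c hc c₀ hc₀
      (fun p => (hbound p).1) W hWconv h0W r hr hball θ (t₁/θ + t₂/θ + 5*δ)
      hθ0 hθ1 hTpos x z Γ hΓsm hΓ0 hΓT hΓd
    have hTmem : (t₁/θ + t₂/θ + 5*δ) ∈ S x z :=
      (hmem x z _).2 ⟨hTpos, P, hPsm.of_le le_top, hP0, hPT, hPd⟩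
    have hddle : dd x z ≤ t₁/θ + t₂/θ + 5*δ := by
      rw [hS]
      exact csInf_le (hbdd x z) hTmem
    rw [hS x y, hS y z]
    have h8 : δ * 8 = ε := by rw [hδdef]; ring
    calc dd x z ≤ t₁/θ + t₂/θ + 5*δ := hddle
    _ = t₁ + t₂ + 6*δ := by rw [hθsum]; ring
    _ ≤ sInf (S x y) + sInf (S y z) + ε := by linarith
end
end

section
/- Let c : ℝ^d → (0,∞) be C¹ and let Φ be the support function of a compact convex balanced absorbing set with 0 in its interior. Suppose (γ, p) : [0,T] → ℝ^d × ℝ^d is C¹ and satisfies p'(s) = −∇c(γ(s))·Φ(p(s)) and γ'(s) ∈ c(γ(s))·∂Φ(p(s)) (subdifferential), with selection ℓ(s) ∈ ∂Φ(p(s)) measurable. Then for all s, Φ(p(s)) = Φ(p(0))·exp(−∫₀ˢ ⟨ℓ(r), ∇c(γ(r))⟩ dr). In particular, p(0) ≠ 0 implies p(s) ≠ 0 for all s ∈ [0,T]. -/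
/-!
The subgradient inequality makes `t ↦ Φ (p s) + ⟪ℓ s, p t - p s⟫` an affine minorant of `Φ ∘ p`
touching it at `s`, so wherever the Lipschitz function `Φ ∘ p` is differentiable its derivative is
`⟪ℓ s, p' s⟫ = -Φ (p s) ⟪ℓ s, ∇c (γ s)⟫`. Thus `f = Φ ∘ p` is an absolutely continuous solution of
`f' = -g f` almost everywhere, where `g = ⟪ℓ, ∇c ∘ γ⟫` is bounded because subgradients of a Lipschitz
function are. The integrating factor makes `f · exp (∫ g)` absolutely continuous with derivative
zero almost everywhere, hence constant. Since `Φ` vanishes only at `0`,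
the exponential formula also shows that `p` never vanishes when `p 0 ≠ 0`.
-/

open MeasureTheory Set Filter
open scoped Topology NNReal Pointwise RealInnerProductSpace

noncomputable section

section AbsolutelyContinuous

variable {F Y : Type*} [SeminormedAddCommGroup F] [PseudoMetricSpace Y] {a b : ℝ}

theorem LocallyLipschitz.comp_absolutelyContinuousOnInterval {φ : F → Y} {u : ℝ → F}
    (hφ : LocallyLipschitz φ) (hu : AbsolutelyContinuousOnInterval u a b) :
    AbsolutelyContinuousOnInterval (fun x ↦ φ (u x)) a b := by
  obtain ⟨K, hK⟩ := hφ.locallyLipschitzOn.exists_lipschitzOnWith_of_compact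
    (isCompact_uIcc.image_of_continuousOn hu.continuousOn)
  have hbound : Tendsto (fun E : ℕ × (ℕ → ℝ × ℝ) ↦
      K * ∑ i ∈ Finset.range E.1, dist (u (E.2 i).1) (u (E.2 i).2))
      (AbsolutelyContinuousOnInterval.totalLengthFilter ⊓
        𝓟 (AbsolutelyContinuousOnInterval.disjWithin a b)) (𝓝 0) := by
    simpa using Tendsto.const_mul (K : ℝ) hu
  refine squeeze_zero' (Eventually.of_forall fun _ ↦ Finset.sum_nonneg fun _ _ ↦ dist_nonneg)
    ?_ hbound
  filter_upwards [mem_inf_of_right (mem_principal_self _)] with E hE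
  rw [Finset.mul_sum]
  gcongr with i hi
  exact hK.dist_le_mul _ (mem_image_of_mem u (hE.1 i hi).1) _ (mem_image_of_mem u (hE.1 i hi).2)

end AbsolutelyContinuous

theorem AbsolutelyContinuousOnInterval.eq_mul_exp_neg_integral_of_ae_hasDerivAt {f g : ℝ → ℝ}
    {a b : ℝ} (hf : AbsolutelyContinuousOnInterval f a b) (hg : IntervalIntegrable g volume a b)
    (hode : ∀ᵐ x, x ∈ uIcc a b → HasDerivAt f (-(g x * f x)) x) :
    ∀ x ∈ uIcc a b, f x = f a * Real.exp (-∫ t in a..x, g t) := by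
  have hexp : AbsolutelyContinuousOnInterval (fun x ↦ Real.exp (∫ t in a..x, g t)) a b :=
    Real.contDiff_exp.locallyLipschitz.comp_absolutelyContinuousOnInterval
      (hg.absolutelyContinuousOnInterval_intervalIntegral left_mem_uIcc)
  have hconst : ∀ᵐ x, x ∈ uIcc a b →
      HasDerivAt (fun x ↦ f x * Real.exp (∫ t in a..x, g t)) 0 x := by
    filter_upwards [hode, hg.ae_hasDerivAt_integral] with x hfx hGx hx
    exact ((hfx hx).fun_mul (hGx hx a left_mem_uIcc).exp).congr_deriv (by ring)
  obtain ⟨C, hC⟩ := (hf.fun_mul hexp).const_of_ae_hasDerivAt_zero hconst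
  intro x hx
  have hCa := hC a left_mem_uIcc
  rw [intervalIntegral.integral_same, Real.exp_zero, mul_one] at hCa
  rw [hCa, ← hC x hx, Real.exp_neg, mul_inv_cancel_right₀ (Real.exp_pos _).ne']

section SupportFunction

variable {E : Type*} [NormedAddCommGroup E] [InnerProductSpace ℝ E]

def supportFunction (W : Set E) (q : E) : ℝ := ⨆ x : W, ⟪q, (x : E)⟫

variable {W : Set E}

@[simp]
theorem supportFunction_zero : supportFunction W 0 = 0 := by
  simp [supportFunction]

theorem inner_le_supportFunction (hW : Bornology.IsBounded W) (q : E) {x : E} (hx : x ∈ W) :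
    ⟪q, x⟫ ≤ supportFunction W q := by
  obtain ⟨C, hC⟩ := hW.exists_norm_le
  refine le_ciSup (f := fun y : W ↦ ⟪q, (y : E)⟫) ⟨‖q‖ * C, ?_⟩ ⟨x, hx⟩
  rintro _ ⟨y, rfl⟩
  exact (real_inner_le_norm _ _).trans (by gcongr; exact hC y y.2)

theorem lipschitzWith_supportFunction {K : ℝ≥0} (hne : W.Nonempty) (hWK : ∀ x ∈ W, ‖x‖ ≤ K) :
    LipschitzWith K (supportFunction W) := by
  have : Nonempty W := hne.to_subtype
  refine LipschitzWith.of_le_add_mul K fun q r ↦ ciSup_le fun x ↦ ?_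
  calc ⟪q, (x : E)⟫ = ⟪r, (x : E)⟫ + ⟪q - r, (x : E)⟫ := by rw [inner_sub_left]; ring
    _ ≤ supportFunction W r + ‖q - r‖ * K := by
      gcongr
      · exact inner_le_supportFunction (isBounded_iff_forall_norm_le.2 ⟨K, hWK⟩) r x.2
      · exact (real_inner_le_norm _ _).trans (by gcongr; exact hWK x x.2)
    _ = supportFunction W r + K * dist q r := by rw [dist_eq_norm, mul_comm]

theorem supportFunction_pos (hW : Bornology.IsBounded W) (h0 : (0 : E) ∈ interior W) {q : E}
    (hq : q ≠ 0) : 0 < supportFunction W q := by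
  have hsmul : Tendsto (fun t : ℝ ↦ t • q) (𝓝[>] 0) (𝓝 0) := by
    have : Continuous fun t : ℝ ↦ t • q := by fun_prop
    exact (this.tendsto' 0 0 (zero_smul ℝ q)).mono_left nhdsWithin_le_nhds
  obtain ⟨t, htW, ht⟩ := ((hsmul.eventually (mem_interior_iff_mem_nhds.1 h0)).and
    self_mem_nhdsWithin).exists
  calc 0 < t * ‖q‖ ^ 2 := mul_pos ht (pow_pos (norm_pos_iff.2 hq) 2)
    _ = ⟪q, t • q⟫ := by rw [real_inner_smul_right, real_inner_self_eq_norm_sq]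
    _ ≤ supportFunction W q := inner_le_supportFunction hW q htW

end SupportFunction

section Subgradient

variable {E : Type*} [NormedAddCommGroup E] [InnerProductSpace ℝ E]

theorem norm_le_of_forall_le_add_inner {Φ : E → ℝ} {K : ℝ≥0} {p ℓ : E} (hΦ : LipschitzWith K Φ)
    (hℓ : ∀ q, Φ p + ⟪ℓ, q - p⟫ ≤ Φ q) : ‖ℓ‖ ≤ K := by
  have hsub : ‖ℓ‖ ^ 2 ≤ Φ (p + ℓ) - Φ p := by
    have := hℓ (p + ℓ)
    rw [add_sub_cancel_left, real_inner_self_eq_norm_sq] at this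
    linarith
  have hlip : Φ (p + ℓ) - Φ p ≤ K * ‖ℓ‖ := by
    simpa [dist_eq_norm] using (le_abs_self _).trans (hΦ.dist_le_mul (p + ℓ) p)
  nlinarith [norm_nonneg ℓ, K.2]

theorem hasDerivAt_comp_of_forall_le_add_inner {Φ : E → ℝ} {p : ℝ → E} {ℓ v : E} {s : ℝ}
    (hℓ : ∀ q, Φ (p s) + ⟪ℓ, q - p s⟫ ≤ Φ q) (hp : HasDerivAt p v s)
    (hd : DifferentiableAt ℝ (fun t ↦ Φ (p t)) s) :
    HasDerivAt (fun t ↦ Φ (p t)) ⟪ℓ, v⟫ s := by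
  have hmin : IsLocalMin (fun t ↦ Φ (p t) - (Φ (p s) + ⟪ℓ, p t - p s⟫)) s :=
    Eventually.of_forall fun t ↦ by
      simp only [sub_self, inner_zero_right, add_zero]
      linarith [hℓ (p t)]
  have hminorant : HasDerivAt (fun t ↦ Φ (p s) + ⟪ℓ, p t - p s⟫) ⟪ℓ, v⟫ s :=
    ((innerSL ℝ ℓ).hasFDerivAt.comp_hasDerivAt s (hp.sub_const (p s))).const_add _
  have := hmin.hasDerivAt_eq_zero (hd.hasDerivAt.sub hminorant)
  exact sub_eq_zero.1 this ▸ hd.hasDerivAt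

end Subgradient

section Curves

variable {E : Type*} [NormedAddCommGroup E] [NormedSpace ℝ E] {a b : ℝ}

theorem absolutelyContinuousOnInterval_of_hasDerivAt {p p' : ℝ → E}
    (hp : ∀ s ∈ uIcc a b, HasDerivAt p (p' s) s) (hp' : ContinuousOn p' (uIcc a b)) :
    AbsolutelyContinuousOnInterval p a b := by
  obtain ⟨C, hC⟩ := isCompact_uIcc.exists_bound_of_continuousOn hp'
  refine LipschitzOnWith.absolutelyContinuousOnInterval (K := C.toNNReal) ?_
  refine (convex_uIcc a b).lipschitzOnWith_of_nnnorm_hasDerivWithin_le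
    (fun s hs ↦ (hp s hs).hasDerivWithinAt) fun s hs ↦ ?_
  rw [← NNReal.coe_le_coe, coe_nnnorm]
  exact (hC s hs).trans (Real.le_coe_toNNReal C)

end Curves

theorem intervalIntegrable_inner_of_norm_le {E : Type*} [NormedAddCommGroup E]
    [InnerProductSpace ℝ E] {u w : ℝ → E} {a b C : ℝ} (hu : AEStronglyMeasurable u)
    (hub : ∀ x ∈ uIcc a b, ‖u x‖ ≤ C) (hw : ContinuousOn w (uIcc a b)) :
    IntervalIntegrable (fun x ↦ ⟪u x, w x⟫) volume a b := by
  obtain ⟨D, hD⟩ := isCompact_uIcc.exists_bound_of_continuousOn hw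
  have hC : 0 ≤ C := (norm_nonneg _).trans (hub a left_mem_uIcc)
  refine (intervalIntegrable_const (c := C * D)).mono_fun'
    (hu.restrict.inner ((hw.mono uIoc_subset_uIcc).aestronglyMeasurable measurableSet_uIoc)) ?_
  refine ae_restrict_of_forall_mem measurableSet_uIoc fun x hx ↦ ?_
  exact (abs_real_inner_le_norm _ _).trans
    (mul_le_mul (hub x (uIoc_subset_uIcc hx)) (hD x (uIoc_subset_uIcc hx)) (norm_nonneg _) hC)

theorem support_value_exponential_along_flow_general {d : ℕ}
    (W : Set (EuclideanSpace ℝ (Fin d)))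
    (hWc : IsCompact W)
    (hW0 : (0 : EuclideanSpace ℝ (Fin d)) ∈ interior W)
    (Φ : EuclideanSpace ℝ (Fin d) → ℝ)
    (hΦ : ∀ q, Φ q = ⨆ x : W, (inner ℝ q (x : EuclideanSpace ℝ (Fin d)) : ℝ))
    (c : EuclideanSpace ℝ (Fin d) → ℝ) (hcC1 : ContDiff ℝ 1 c)
    (T : ℝ)
    (γ p ℓ : ℝ → EuclideanSpace ℝ (Fin d))
    (hℓmeas : Measurable ℓ)
    (hℓ : ∀ s ∈ Set.Icc (0 : ℝ) T,
      ∀ q : EuclideanSpace ℝ (Fin d), Φ (p s) + (inner ℝ (ℓ s) (q - p s) : ℝ) ≤ Φ q)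
    (hp' : ∀ s ∈ Set.Icc (0 : ℝ) T,
      HasDerivAt p (-(Φ (p s)) • gradient c (γ s)) s)
    (hγ' : ∀ s ∈ Set.Icc (0 : ℝ) T, HasDerivAt γ (c (γ s) • ℓ s) s) :
    (∀ s ∈ Set.Icc (0 : ℝ) T,
      Φ (p s) = Φ (p 0) * Real.exp (-∫ r in (0 : ℝ)..s, (inner ℝ (ℓ r) (gradient c (γ r)) : ℝ))) ∧
    (p 0 ≠ 0 → ∀ s ∈ Set.Icc (0 : ℝ) T, p s ≠ 0) := by
  obtain rfl : Φ = supportFunction W := funext hΦ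
  obtain ⟨K, hK⟩ : ∃ K : ℝ≥0, ∀ x ∈ W, ‖x‖ ≤ K := by
    obtain ⟨C, hC⟩ := hWc.isBounded.exists_norm_le
    exact ⟨C.toNNReal, fun x hx ↦ (hC x hx).trans (Real.le_coe_toNNReal C)⟩
  have hΦlip := lipschitzWith_supportFunction ⟨0, interior_subset hW0⟩ hK
  have hgrad : Continuous (gradient c) :=
    (InnerProductSpace.toDual ℝ _).symm.continuous.comp (hcC1.continuous_fderiv one_ne_zero)
  have hexp : ∀ s ∈ Icc 0 T, supportFunction W (p s) =
      supportFunction W (p 0) * Real.exp (-∫ r in (0 : ℝ)..s, ⟪ℓ r, gradient c (γ r)⟫) := by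
    intro s hs
    have hT : uIcc 0 T = Icc 0 T := uIcc_of_le (hs.1.trans hs.2)
    have hpc : ContinuousOn p (uIcc 0 T) :=
      hT ▸ fun r hr ↦ (hp' r hr).continuousAt.continuousWithinAt
    have hγc : ContinuousOn γ (uIcc 0 T) :=
      hT ▸ fun r hr ↦ (hγ' r hr).continuousAt.continuousWithinAt
    have hf : AbsolutelyContinuousOnInterval (fun r ↦ supportFunction W (p r)) 0 T :=
      hΦlip.locallyLipschitz.comp_absolutelyContinuousOnInterval
        (absolutelyContinuousOnInterval_of_hasDerivAt (hT ▸ hp')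
          ((hΦlip.continuous.comp_continuousOn hpc).neg.smul (hgrad.comp_continuousOn hγc)))
    have hg : IntervalIntegrable (fun r ↦ ⟪ℓ r, gradient c (γ r)⟫) volume 0 T :=
      intervalIntegrable_inner_of_norm_le hℓmeas.aestronglyMeasurable
        (hT ▸ fun r hr ↦ norm_le_of_forall_le_add_inner hΦlip (hℓ r hr))
        (hgrad.comp_continuousOn hγc)
    have hode : ∀ᵐ r, r ∈ uIcc 0 T → HasDerivAt (fun r ↦ supportFunction W (p r))
        (-(⟪ℓ r, gradient c (γ r)⟫ * supportFunction W (p r))) r := by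
      filter_upwards [hf.ae_differentiableAt] with r hd hr
      convert hasDerivAt_comp_of_forall_le_add_inner (hℓ r (hT ▸ hr)) (hp' r (hT ▸ hr)) (hd hr)
        using 1
      rw [real_inner_smul_right]
      ring
    exact hf.eq_mul_exp_neg_integral_of_ae_hasDerivAt hg hode s (hT ▸ hs)
  refine ⟨hexp, fun h0 s hs hps ↦ ?_⟩
  have hvalue := hexp s hs
  rw [hps, supportFunction_zero] at hvalue
  exact (mul_pos (supportFunction_pos hWc.isBounded hW0 h0) (Real.exp_pos _)).ne hvalue

/-- along the (sub)characteristic flow `p' = −∇c(γ)Φ(p)`,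
`γ' = c(γ)ℓ` with `ℓ(s) ∈ ∂Φ(p(s))`, one has
`Φ(p(s)) = Φ(p(0)) exp(−∫₀ˢ ⟨ℓ(r), ∇c(γ(r))⟩ dr)`; in particular `p(0) ≠ 0` forces
`p(s) ≠ 0` for all `s`. -/
theorem support_value_exponential_along_flow {d : ℕ}
    (W : Set (EuclideanSpace ℝ (Fin d)))
    (hWc : IsCompact W) (hWconv : Convex ℝ W) (hWbal : -W = W)
    (hWabs : ∀ y : EuclideanSpace ℝ (Fin d), ∃ τ : ℝ, 0 < τ ∧ y ∈ τ • W)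
    (hW0 : (0 : EuclideanSpace ℝ (Fin d)) ∈ interior W)
    (Φ : EuclideanSpace ℝ (Fin d) → ℝ)
    (hΦ : ∀ q, Φ q = ⨆ x : W, (inner ℝ q (x : EuclideanSpace ℝ (Fin d)) : ℝ))
    (c : EuclideanSpace ℝ (Fin d) → ℝ) (hcC1 : ContDiff ℝ 1 c) (hcpos : ∀ x, 0 < c x)
    (T : ℝ) (hT : 0 < T)
    (γ p ℓ : ℝ → EuclideanSpace ℝ (Fin d))
    (hℓmeas : Measurable ℓ)
    (hℓ : ∀ s ∈ Set.Icc (0 : ℝ) T,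
      ∀ q : EuclideanSpace ℝ (Fin d), Φ (p s) + (inner ℝ (ℓ s) (q - p s) : ℝ) ≤ Φ q)
    (hp' : ∀ s ∈ Set.Icc (0 : ℝ) T,
      HasDerivAt p (-(Φ (p s)) • gradient c (γ s)) s)
    (hγ' : ∀ s ∈ Set.Icc (0 : ℝ) T, HasDerivAt γ (c (γ s) • ℓ s) s) :
    (∀ s ∈ Set.Icc (0 : ℝ) T,
      Φ (p s) = Φ (p 0) * Real.exp (-∫ r in (0 : ℝ)..s, (inner ℝ (ℓ r) (gradient c (γ r)) : ℝ))) ∧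
    (p 0 ≠ 0 → ∀ s ∈ Set.Icc (0 : ℝ) T, p s ≠ 0) :=
  support_value_exponential_along_flow_general W hWc hW0 Φ hΦ c hcC1 T γ p ℓ hℓmeas hℓ hp' hγ'
end
end
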